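/- arXiv:2409.04320 — 6 statements merged into one kernel-verified Lean document; each statement's English description precedes it below -/
import Mathlib

section
/- Let θ ∈ Int(K) and z ∈ ℝ^d, and set t := ‖z − θ‖_{H(θ)}. Let W ∈ ℝ^{m×m} be the diagonal matrix with entries W_ii = (b_i − a_iᵀz)² / (b_i − a_iᵀθ)². Then ‖W − I_m‖_F ≤ t(2 + t). In particular, if t ≤ 1 then the relative change of the squared slacks satisfies Σ_{i=1}^m ((s_i(z)² − s_i(θ)²)/s_i(θ)²)² ≤ 9t², where s_i(w) := b_i − a_iᵀw. -/
/-!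
With `u i := a_iᵀ (z - θ) / s_i(θ)` the local norm is `t = ‖u‖₂` and `s_i(z) / s_i(θ) = 1 - u i`,
so `W - I = diag (u i ^ 2 - 2 * u i)`. The triangle inequality in `ℓ²` gives
`‖W - I‖_F ≤ ‖(u i ^ 2)ᵢ‖₂ + 2 ‖u‖₂ ≤ t ^ 2 + 2 t`, and `t ≤ 1` turns `t (2 + t)` into `3 t`.
-/

open Matrix Real
open scoped BigOperators

/-- The Hessian of the log-barrier function for the polytope `{x | A x ≤ b}`. -/
noncomputable def logBarrierHessian {m d : ℕ} (A : Matrix (Fin m) (Fin d) ℝ) (b : Fin m → ℝ)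
    (x : Fin d → ℝ) : Matrix (Fin d) (Fin d) ℝ :=
  ∑ i, ((b i - A.mulVec x i) ^ 2)⁻¹ • Matrix.vecMulVec (A i) (A i)

/-- The local norm `‖h‖_M = √(hᵀ M h)`. -/
noncomputable def mnorm {d : ℕ} (M : Matrix (Fin d) (Fin d) ℝ) (h : Fin d → ℝ) : ℝ :=
  Real.sqrt (h ⬝ᵥ M.mulVec h)

/-- The Frobenius norm of a matrix. -/
noncomputable def frobNorm {m n : ℕ} (M : Matrix (Fin m) (Fin n) ℝ) : ℝ :=
  Real.sqrt (∑ i, ∑ j, (M i j) ^ 2)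

theorem dotProduct_sum_smul_vecMulVec_mulVec {ι n : Type*} [Fintype ι] [Fintype n]
    (c : ι → ℝ) (v : Matrix ι n ℝ) (h : n → ℝ) :
    h ⬝ᵥ (∑ i, c i • vecMulVec (v i) (v i)) *ᵥ h = ∑ i, c i * (v i ⬝ᵥ h) ^ 2 := by
  simp only [sum_mulVec, dotProduct_sum, smul_mulVec, vecMulVec_mulVec, dotProduct_smul,
    dotProduct_comm h (v _)]
  simp [sq]

theorem mnorm_logBarrierHessian {m d : ℕ} (A : Matrix (Fin m) (Fin d) ℝ)
    (b : Fin m → ℝ) (x h : Fin d → ℝ) :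
    mnorm (logBarrierHessian A b x) h =
      ‖(WithLp.toLp 2 fun i => (A i ⬝ᵥ h) / (b i - (A *ᵥ x) i) : EuclideanSpace ℝ (Fin m))‖ := by
  rw [mnorm, logBarrierHessian, dotProduct_sum_smul_vecMulVec_mulVec, EuclideanSpace.norm_eq]
  simp [div_pow, inv_mul_eq_div]

theorem frobNorm_diagonal {m : ℕ} (v : Fin m → ℝ) :
    frobNorm (diagonal v) = ‖(WithLp.toLp 2 v : EuclideanSpace ℝ (Fin m))‖ := by
  rw [frobNorm, EuclideanSpace.norm_eq]
  congr 1
  refine Finset.sum_congr rfl fun i _ => ?_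
  rw [Finset.sum_eq_single i (fun j _ hj => by simp [diagonal_apply_ne _ hj.symm]) (by simp)]
  simp

theorem norm_sq_sub_two_mul_le {ι : Type*} [Fintype ι] (u : EuclideanSpace ℝ ι) :
    ‖(WithLp.toLp 2 fun i => u i ^ 2 - 2 * u i : EuclideanSpace ℝ ι)‖ ≤ ‖u‖ * (2 + ‖u‖) := by
  have hsq : ‖(WithLp.toLp 2 fun i => u i ^ 2 : EuclideanSpace ℝ ι)‖ ≤ ‖u‖ ^ 2 := by
    refine le_of_sq_le_sq ?_ (by positivity)
    simp only [EuclideanSpace.real_norm_sq_eq]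
    exact Finset.sum_sq_le_sq_sum_of_nonneg fun i _ => sq_nonneg (u i)
  have hsplit : (WithLp.toLp 2 fun i => u i ^ 2 - 2 * u i : EuclideanSpace ℝ ι) =
      (WithLp.toLp 2 fun i => u i ^ 2) - (2 : ℝ) • u := by
    ext i; simp
  calc _ ≤ ‖(WithLp.toLp 2 fun i => u i ^ 2 : EuclideanSpace ℝ ι)‖ + ‖(2 : ℝ) • u‖ :=
        hsplit ▸ norm_sub_le _ _
    _ ≤ ‖u‖ ^ 2 + 2 * ‖u‖ := by rw [norm_smul, Real.norm_two]; gcongr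
    _ = ‖u‖ * (2 + ‖u‖) := by ring

theorem sub_sq_div_sq_sub_one {s : ℝ} (hs : s ≠ 0) (a : ℝ) :
    (s - a) ^ 2 / s ^ 2 - 1 = (a / s) ^ 2 - 2 * (a / s) := by
  field_simp
  ring

theorem stmt2_general {m d : ℕ} (A : Matrix (Fin m) (Fin d) ℝ) (b : Fin m → ℝ)
    (θ z : Fin d → ℝ) (hθ : ∀ i, A.mulVec θ i < b i) :
    frobNorm
        (Matrix.diagonal (fun i => (b i - A.mulVec z i) ^ 2 / (b i - A.mulVec θ i) ^ 2) -
          (1 : Matrix (Fin m) (Fin m) ℝ)) ≤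
      mnorm (logBarrierHessian A b θ) (z - θ) * (2 + mnorm (logBarrierHessian A b θ) (z - θ)) ∧
    (mnorm (logBarrierHessian A b θ) (z - θ) ≤ 1 →
      ∑ i, (((b i - A.mulVec z i) ^ 2 - (b i - A.mulVec θ i) ^ 2) / (b i - A.mulVec θ i) ^ 2) ^ 2 ≤
        9 * mnorm (logBarrierHessian A b θ) (z - θ) ^ 2) := by
  set u : EuclideanSpace ℝ (Fin m) :=
    WithLp.toLp 2 fun i => (A i ⬝ᵥ (z - θ)) / (b i - (A *ᵥ θ) i)
  set v : EuclideanSpace ℝ (Fin m) := WithLp.toLp 2 fun i => u i ^ 2 - 2 * u i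
  have hratio (i : Fin m) :
      (b i - (A *ᵥ z) i) ^ 2 / (b i - (A *ᵥ θ) i) ^ 2 - 1 = v i := by
    have hslack : b i - (A *ᵥ z) i = (b i - (A *ᵥ θ) i) - A i ⬝ᵥ (z - θ) := by
      rw [dotProduct_sub]; simp only [mulVec]; ring
    rw [hslack, sub_sq_div_sq_sub_one (sub_pos.2 (hθ i)).ne']
  have hfrob : frobNorm (diagonal (fun i => (b i - (A *ᵥ z) i) ^ 2 / (b i - (A *ᵥ θ) i) ^ 2) - 1)
      = ‖v‖ := by
    rw [← diagonal_one, diagonal_sub, frobNorm_diagonal]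
    exact congrArg _ (congrArg _ (funext hratio))
  have hrel : ∑ i, (((b i - (A *ᵥ z) i) ^ 2 - (b i - (A *ᵥ θ) i) ^ 2) / (b i - (A *ᵥ θ) i) ^ 2) ^ 2
      = ‖v‖ ^ 2 := by
    rw [EuclideanSpace.real_norm_sq_eq]
    refine Finset.sum_congr rfl fun i _ => ?_
    rw [← hratio, sub_div, div_self (pow_ne_zero 2 (sub_pos.2 (hθ i)).ne')]
  have hv : ‖v‖ ≤ ‖u‖ * (2 + ‖u‖) := norm_sq_sub_two_mul_le u
  rw [mnorm_logBarrierHessian, hfrob, hrel]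
  refine ⟨hv, fun hu1 => ?_⟩
  calc ‖v‖ ^ 2 ≤ (‖u‖ * (2 + ‖u‖)) ^ 2 := by gcongr
    _ ≤ (‖u‖ * 3) ^ 2 := by gcongr; linarith
    _ = 9 * ‖u‖ ^ 2 := by ring

/-- With `t := ‖z - θ‖_{H(θ)}` and `W := diag((b_i - a_iᵀz)²/(b_i - a_iᵀθ)²)`,
one has `‖W - I‖_F ≤ t(2+t)`; and if `t ≤ 1` then
`∑ i, ((s_i(z)² - s_i(θ)²)/s_i(θ)²)² ≤ 9 t²`. -/
theorem stmt2 {m d : ℕ} (A : Matrix (Fin m) (Fin d) ℝ) (b : Fin m → ℝ)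
    (hbdd : ∃ R : ℝ, ∀ w : Fin d → ℝ, (∀ i, A.mulVec w i ≤ b i) → ∀ j, |w j| ≤ R)
    (θ z : Fin d → ℝ) (hθ : ∀ i, A.mulVec θ i < b i) :
    frobNorm
        (Matrix.diagonal (fun i => (b i - A.mulVec z i) ^ 2 / (b i - A.mulVec θ i) ^ 2) -
          (1 : Matrix (Fin m) (Fin m) ℝ)) ≤
      mnorm (logBarrierHessian A b θ) (z - θ) * (2 + mnorm (logBarrierHessian A b θ) (z - θ)) ∧
    (mnorm (logBarrierHessian A b θ) (z - θ) ≤ 1 →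
      ∑ i, (((b i - A.mulVec z i) ^ 2 - (b i - A.mulVec θ i) ^ 2) / (b i - A.mulVec θ i) ^ 2) ^ 2 ≤
        9 * mnorm (logBarrierHessian A b θ) (z - θ) ^ 2) :=
  stmt2_general A b θ z hθ
end

section
/- (Hanson–Wright inequality for Gaussian vectors) Let M ∈ ℝ^{d×d} and let v be a random vector in ℝ^d with independent standard Gaussian N(0,1) coordinates. Then for every t > 0, P( |vᵀMv − tr(M)| > t ) ≤ 2 exp( −(1/8) · min( t² / ‖M‖_F², t / ‖M‖_2 ) ). -/
open Matrix MeasureTheory ProbabilityTheory Real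
open scoped BigOperators

/-- The spectral (ℓ²-operator) norm of a matrix. -/
noncomputable def specNorm {m n : ℕ} (M : Matrix (Fin m) (Fin n) ℝ) : ℝ :=
  ‖LinearMap.toContinuousLinearMap (Matrix.toEuclideanLin M)‖

/-! Symmetrising `M` changes neither `vᵀMv` nor `tr M`, and the standard Gaussian measure on `ℝᵈ`
is invariant under orthogonal changes of coordinates. In an orthonormal eigenbasis of the symmetric
part `A` the centred form `vᵀMv - tr M` therefore has the law of `∑ λᵢ (wᵢ² - 1)` with `wᵢ`
i.i.d. standard Gaussian. For `|a| ≤ 1/4`, `E exp (a (w² - 1)) = e⁻ᵃ / √(1 - 2a) ≤ exp (2a²)`, so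
for `0 ≤ s ≤ 1 / (4‖M‖₂)` (recall `|λᵢ| ≤ ‖M‖₂` and `∑ λᵢ² = ‖A‖_F² ≤ ‖M‖_F²`) the Chernoff bound
gives `P(|vᵀMv - tr M| > t) ≤ 2 exp (2s²‖M‖_F² - st)`; then take
`s = min (t / (4‖M‖_F²)) (1 / (4‖M‖₂))`. -/

lemma exp_neg_add_sq_le_one_sub {u : ℝ} (hu : |u| ≤ 1 / 2) : exp (-(u + u ^ 2)) ≤ 1 - u := by
  obtain ⟨hu₁, hu₂⟩ := abs_le.mp hu
  rcases le_total 0 u with h | h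
  · have hq := quadratic_le_exp_of_nonneg (by positivity : 0 ≤ u + u ^ 2)
    rw [exp_neg, inv_le_iff_one_le_mul₀' (exp_pos _)]
    calc (1 : ℝ) ≤ (1 + (u + u ^ 2) + (u + u ^ 2) ^ 2 / 2) * (1 - u) := by
          nlinarith [mul_nonneg (mul_nonneg h h) (mul_nonneg h h), mul_nonneg h h,
            mul_nonneg (mul_nonneg h h) h]
      _ ≤ exp (u + u ^ 2) * (1 - u) := by gcongr; linarith
  · have hy : |-(u + u ^ 2)| ≤ 1 := by rw [abs_le]; constructor <;> nlinarith
    have hq := (abs_le.mp (abs_exp_sub_one_sub_id_le hy)).2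
    nlinarith [mul_nonneg (mul_nonneg (neg_nonneg.2 h) (sq_nonneg u)) (by linarith : 0 ≤ 2 + u)]

lemma chernoff_exponent_at_min_le {t F S : ℝ} (ht : 0 < t) (hF : 0 < F) (hS : 0 < S) :
    2 * min (t / (4 * F)) (1 / (4 * S)) ^ 2 * F - min (t / (4 * F)) (1 / (4 * S)) * t ≤
      -(1 / 8) * min (t ^ 2 / F) (t / S) := by
  set s := min (t / (4 * F)) (1 / (4 * S))
  have hs : 0 ≤ s := le_min (by positivity) (by positivity)
  have hsF : 2 * s * F ≤ t / 2 := by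
    have hst : s ≤ t / (4 * F) := min_le_left _ _
    rw [le_div_iff₀ (by positivity)] at hst
    linarith
  have hst : s * t = 1 / 4 * min (t ^ 2 / F) (t / S) := by
    rw [min_mul_of_nonneg _ _ ht.le, mul_min_of_nonneg _ _ (by norm_num : (0:ℝ) ≤ 1 / 4)]
    congr 1 <;> field_simp
  nlinarith [mul_le_mul_of_nonneg_left hsF hs]

lemma lintegral_exp_mul_sq_sub_one_gaussianReal {a : ℝ} (ha : a < 1 / 2) :
    ∫⁻ x, ENNReal.ofReal (exp (a * (x ^ 2 - 1))) ∂gaussianReal 0 1 =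
      ENNReal.ofReal (exp (-a) / √(1 - 2 * a)) := by
  have hb : 0 < 1 / 2 - a := by linarith
  have hdensity (x : ℝ) : gaussianPDF 0 1 x * ENNReal.ofReal (exp (a * (x ^ 2 - 1))) =
      ENNReal.ofReal ((√(2 * π))⁻¹ * exp (-a) * exp (-(1 / 2 - a) * x ^ 2)) := by
    rw [gaussianPDF_def, ← ENNReal.ofReal_mul (gaussianPDFReal_nonneg 0 1 x)]
    simp only [gaussianPDFReal, NNReal.coe_one, mul_one, sub_zero, mul_assoc, ← exp_add]
    ring_nf
  rw [gaussianReal_of_var_ne_zero 0 one_ne_zero,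
    lintegral_withDensity_eq_lintegral_mul _ (measurable_gaussianPDF 0 1) (by fun_prop)]
  simp only [Pi.mul_apply, hdensity]
  rw [← ofReal_integral_eq_lintegral_ofReal ((integrable_exp_neg_mul_sq hb).const_mul _)
    (ae_of_all _ fun x => by positivity), integral_const_mul, integral_gaussian]
  have hsqrt : √(π / (1 / 2 - a)) = √(2 * π) / √(1 - 2 * a) := by
    rw [← sqrt_div (by positivity)]
    congr 1
    field_simp
  have h2π : √(2 * π) ≠ 0 := by positivity
  rw [hsqrt]
  congr 1
  field_simp

lemma lintegral_exp_mul_sq_sub_one_gaussianReal_le {a : ℝ} (ha : |a| ≤ 1 / 4) :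
    ∫⁻ x, ENNReal.ofReal (exp (a * (x ^ 2 - 1))) ∂gaussianReal 0 1 ≤
      ENNReal.ofReal (exp (2 * a ^ 2)) := by
  have h2a : 0 < 1 - 2 * a := by linarith [le_of_abs_le ha]
  rw [lintegral_exp_mul_sq_sub_one_gaussianReal (by linarith)]
  refine ENNReal.ofReal_le_ofReal ?_
  rw [div_le_iff₀ (sqrt_pos.mpr h2a)]
  have hkey : exp (-a - 2 * a ^ 2) ≤ √(1 - 2 * a) := by
    have hu : |2 * a| ≤ 1 / 2 := by rw [abs_mul, abs_two]; linarith
    rw [le_sqrt (exp_pos _).le h2a.le, ← exp_nat_mul]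
    convert exp_neg_add_sq_le_one_sub hu using 2
    push_cast
    ring
  calc exp (-a) = exp (2 * a ^ 2) * exp (-a - 2 * a ^ 2) := by rw [← exp_add]; ring_nf
    _ ≤ exp (2 * a ^ 2) * √(1 - 2 * a) := by gcongr

lemma lintegral_pi_prod_apply {ι : Type*} [Fintype ι] {Ω : ι → Type*} [∀ i, MeasurableSpace (Ω i)]
    (μ : ∀ i, Measure (Ω i)) [∀ i, IsProbabilityMeasure (μ i)] (f : ∀ i, Ω i → ENNReal)
    (hf : ∀ i, Measurable (f i)) :
    ∫⁻ x, ∏ i, f i (x i) ∂Measure.pi μ = ∏ i, ∫⁻ y, f i y ∂μ i := by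
  rw [lintegral_prod_eq_prod_lintegral_of_indepFun _ _
    (iIndepFun_pi (X := f) fun i => (hf i).aemeasurable)
    fun i => (hf i).comp (measurable_pi_apply i)]
  exact Finset.prod_congr rfl fun i _ => (measurePreserving_eval μ i).lintegral_comp (hf i)

lemma lintegral_exp_sum_mul_sq_sub_one_le {ι : Type*} [Fintype ι] {c : ι → ℝ}
    (hc : ∀ i, |c i| ≤ 1 / 4) :
    ∫⁻ w, ENNReal.ofReal (exp (∑ i, c i * (w i ^ 2 - 1)))
        ∂(Measure.pi fun _ : ι => gaussianReal 0 1) ≤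
      ENNReal.ofReal (exp (2 * ∑ i, c i ^ 2)) := by
  simp only [exp_sum, Finset.mul_sum, ENNReal.ofReal_prod_of_nonneg fun i _ => (exp_pos _).le]
  rw [lintegral_pi_prod_apply _ (fun i x => ENNReal.ofReal (exp (c i * (x ^ 2 - 1))))
    fun i => by fun_prop]
  exact Finset.prod_le_prod' fun i _ => lintegral_exp_mul_sq_sub_one_gaussianReal_le (hc i)

lemma measure_ge_le_exp_mul_lintegral_exp {Ω : Type*} [MeasurableSpace Ω] (μ : Measure Ω)
    {X : Ω → ℝ} (hX : AEMeasurable X μ) {s : ℝ} (hs : 0 ≤ s) (t : ℝ) :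
    μ {ω | t ≤ X ω} ≤
      ENNReal.ofReal (exp (-(s * t))) * ∫⁻ ω, ENNReal.ofReal (exp (s * X ω)) ∂μ := by
  have hmarkov := mul_meas_ge_le_lintegral₀ (μ := μ)
    (f := fun ω => ENNReal.ofReal (exp (s * X ω))) (by fun_prop) (ENNReal.ofReal (exp (s * t)))
  have hsub :
      {ω | t ≤ X ω} ⊆ {ω | ENNReal.ofReal (exp (s * t)) ≤ ENNReal.ofReal (exp (s * X ω))} :=
    fun ω hω => ENNReal.ofReal_le_ofReal (exp_le_exp.mpr (mul_le_mul_of_nonneg_left hω hs))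
  have hcancel : ENNReal.ofReal (exp (-(s * t))) * ENNReal.ofReal (exp (s * t)) = 1 := by
    rw [← ENNReal.ofReal_mul (exp_pos _).le, ← exp_add, neg_add_cancel, exp_zero,
      ENNReal.ofReal_one]
  calc μ {ω | t ≤ X ω}
      = ENNReal.ofReal (exp (-(s * t))) * (ENNReal.ofReal (exp (s * t)) * μ {ω | t ≤ X ω}) := by
        rw [← mul_assoc, hcancel, one_mul]
    _ ≤ ENNReal.ofReal (exp (-(s * t))) * ∫⁻ ω, ENNReal.ofReal (exp (s * X ω)) ∂μ := by
        gcongr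
        refine le_trans ?_ hmarkov
        gcongr

section WeightedChiSquare

variable {ι : Type*} [Fintype ι]

lemma measure_ge_sum_mul_sq_sub_one_le (lam : ι → ℝ) {s : ℝ} (hs : 0 ≤ s)
    (hlam : ∀ i, |s * lam i| ≤ 1 / 4) (t : ℝ) :
    (Measure.pi fun _ : ι => gaussianReal 0 1) {w | t ≤ ∑ i, lam i * (w i ^ 2 - 1)} ≤
      ENNReal.ofReal (exp (2 * s ^ 2 * ∑ i, lam i ^ 2 - s * t)) := by
  refine (measure_ge_le_exp_mul_lintegral_exp _ (Measurable.aemeasurable (by fun_prop)) hs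
    t).trans ?_
  have hmgf := lintegral_exp_sum_mul_sq_sub_one_le hlam
  simp only [Finset.mul_sum, ← mul_assoc, mul_pow] at hmgf ⊢
  calc _ ≤ ENNReal.ofReal (exp (-(s * t))) *
          ENNReal.ofReal (exp (∑ i, 2 * s ^ 2 * lam i ^ 2)) := by
        gcongr
    _ = _ := by rw [← ENNReal.ofReal_mul (exp_pos _).le, ← exp_add]; ring_nf

lemma measure_lt_abs_sum_mul_sq_sub_one_le (lam : ι → ℝ) {s : ℝ} (hs : 0 ≤ s)
    (hlam : ∀ i, |s * lam i| ≤ 1 / 4) (t : ℝ) :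
    (Measure.pi fun _ : ι => gaussianReal 0 1) {w | t < |∑ i, lam i * (w i ^ 2 - 1)|} ≤
      ENNReal.ofReal (2 * exp (2 * s ^ 2 * ∑ i, lam i ^ 2 - s * t)) := by
  have hsplit : {w : ι → ℝ | t < |∑ i, lam i * (w i ^ 2 - 1)|} ⊆
      {w | t ≤ ∑ i, lam i * (w i ^ 2 - 1)} ∪ {w | t ≤ ∑ i, -lam i * (w i ^ 2 - 1)} := by
    intro w (hw : t < |_|)
    rcases lt_abs.mp hw with h | h
    · exact Or.inl h.le
    · right
      show t ≤ ∑ i, -lam i * (w i ^ 2 - 1)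
      simpa only [neg_mul, Finset.sum_neg_distrib] using h.le
  have hneg := measure_ge_sum_mul_sq_sub_one_le (-lam) hs (by simpa using hlam) t
  simp only [Pi.neg_apply, neg_sq] at hneg
  calc _ ≤ _ := measure_mono hsplit
    _ ≤ _ := measure_union_le _ _
    _ ≤ _ := add_le_add (measure_ge_sum_mul_sq_sub_one_le lam hs hlam t) hneg
    _ = _ := by rw [← ENNReal.ofReal_add (exp_pos _).le (exp_pos _).le]; ring_nf

end WeightedChiSquare

lemma pi_gaussianReal_eq_map_stdGaussian {ι : Type*} [Fintype ι] :
    Measure.pi (fun _ : ι => gaussianReal 0 1) =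
      (stdGaussian (EuclideanSpace ℝ ι)).map WithLp.ofLp := by
  rw [← map_pi_eq_stdGaussian, Measure.map_map (by fun_prop) (by fun_prop)]
  exact Measure.map_id.symm

lemma measurePreserving_sum_smul_orthonormalBasis {ι : Type*} [Fintype ι]
    (b : OrthonormalBasis ι ℝ (EuclideanSpace ℝ ι)) :
    MeasurePreserving (fun w : ι → ℝ => ∑ i, w i • ⇑(b i))
      (Measure.pi fun _ => gaussianReal 0 1) (Measure.pi fun _ => gaussianReal 0 1) := by
  refine ⟨by fun_prop, ?_⟩
  conv_rhs => rw [pi_gaussianReal_eq_map_stdGaussian, stdGaussian_eq_map_pi_orthonormalBasis b,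
    Measure.map_map (by fun_prop) (by fun_prop)]
  congr 1
  ext w : 1
  simp

namespace Matrix

variable {n : Type*}

noncomputable def symmPart (M : Matrix n n ℝ) : Matrix n n ℝ := (1 / 2 : ℝ) • (M + Mᵀ)

lemma symmPart_apply (M : Matrix n n ℝ) (i j : n) : symmPart M i j = (M i j + M j i) / 2 := by
  simp only [symmPart, smul_apply, add_apply, transpose_apply, smul_eq_mul]
  ring

lemma isHermitian_symmPart (M : Matrix n n ℝ) : (symmPart M).IsHermitian := by
  ext i j
  simp only [conjTranspose_apply, star_trivial, symmPart_apply]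
  ring

lemma dotProduct_symmPart_mulVec [Fintype n] (M : Matrix n n ℝ) (v : n → ℝ) :
    v ⬝ᵥ symmPart M *ᵥ v = v ⬝ᵥ M *ᵥ v := by
  rw [symmPart, smul_mulVec, dotProduct_smul, add_mulVec, dotProduct_add, mulVec_transpose,
    dotProduct_comm v (v ᵥ* M), ← dotProduct_mulVec, smul_eq_mul]
  ring

lemma trace_symmPart [Fintype n] (M : Matrix n n ℝ) : (symmPart M).trace = M.trace := by
  rw [symmPart, trace_smul, trace_add, trace_transpose, smul_eq_mul]
  ring

lemma sum_sq_symmPart_le [Fintype n] (M : Matrix n n ℝ) :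
    ∑ i, ∑ j, symmPart M i j ^ 2 ≤ ∑ i, ∑ j, M i j ^ 2 := by
  calc ∑ i, ∑ j, symmPart M i j ^ 2 ≤ ∑ i, ∑ j, (M i j ^ 2 + M j i ^ 2) / 2 := by
        gcongr with i _ j _
        rw [symmPart_apply]
        nlinarith [sq_nonneg (M i j - M j i)]
    _ = ∑ i, ∑ j, M i j ^ 2 := by
        simp only [add_div, Finset.sum_add_distrib, ← Finset.sum_div]
        rw [Finset.sum_comm (f := fun i j => M j i ^ 2)]
        ring

lemma IsHermitian.sum_eigenvalues_sq [Fintype n] [DecidableEq n] {A : Matrix n n ℝ}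
    (hA : A.IsHermitian) :
    ∑ i, hA.eigenvalues i ^ 2 = ∑ i, ∑ j, A i j ^ 2 := by
  have hdiag : (A * A).trace = ∑ i, hA.eigenvalues i ^ 2 := by
    conv_lhs => rw [hA.spectral_theorem]
    rw [← map_mul, Unitary.conjStarAlgAut_apply, trace_mul_cycle, Unitary.coe_star_mul_self,
      one_mul, diagonal_mul_diagonal, trace_diagonal]
    simp [sq]
  have hentries : (A * A).trace = ∑ i, ∑ j, A i j ^ 2 := by
    simp only [trace, diag_apply, mul_apply, sq]
    exact Finset.sum_congr rfl fun i _ => Finset.sum_congr rfl fun j _ => by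
      rw [← hA.apply j i, star_trivial]
  rw [← hdiag, hentries]

lemma IsHermitian.dotProduct_mulVec_sum_smul_eigenvectorBasis [Fintype n] [DecidableEq n]
    {A : Matrix n n ℝ} (hA : A.IsHermitian) (w : n → ℝ) :
    (∑ i, w i • ⇑(hA.eigenvectorBasis i)) ⬝ᵥ A *ᵥ (∑ i, w i • ⇑(hA.eigenvectorBasis i)) =
      ∑ i, hA.eigenvalues i * w i ^ 2 := by
  have hdot (i j : n) : ⇑(hA.eigenvectorBasis i) ⬝ᵥ ⇑(hA.eigenvectorBasis j) =
      if i = j then 1 else 0 := by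
    rw [← orthonormal_iff_ite.mp hA.eigenvectorBasis.orthonormal i j,
      EuclideanSpace.inner_eq_star_dotProduct, dotProduct_comm, star_trivial]
  simp only [mulVec_sum, mulVec_smul, hA.mulVec_eigenvectorBasis, sum_dotProduct, dotProduct_sum,
    smul_dotProduct, dotProduct_smul, hdot, smul_eq_mul, mul_ite, mul_one, mul_zero,
    Finset.sum_ite_eq', Finset.mem_univ, if_true]
  exact Finset.sum_congr rfl fun i _ => by ring

lemma IsHermitian.measure_dotProduct_mulVec_sub_trace_mem_eq [Fintype n] [DecidableEq n]
    {A : Matrix n n ℝ} (hA : A.IsHermitian) {S : Set ℝ} (hS : MeasurableSet S) :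
    (Measure.pi fun _ : n => gaussianReal 0 1) {v | v ⬝ᵥ A *ᵥ v - A.trace ∈ S} =
      (Measure.pi fun _ : n => gaussianReal 0 1)
        {w | ∑ i, hA.eigenvalues i * (w i ^ 2 - 1) ∈ S} := by
  have hmeas : MeasurableSet {v : n → ℝ | v ⬝ᵥ A *ᵥ v - A.trace ∈ S} :=
    hS.preimage (Continuous.measurable (by fun_prop))
  rw [← (measurePreserving_sum_smul_orthonormalBasis hA.eigenvectorBasis).measure_preimage
    hmeas.nullMeasurableSet]
  simp only [Set.preimage_ofPred_eq, hA.dotProduct_mulVec_sum_smul_eigenvectorBasis,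
    hA.trace_eq_sum_eigenvalues, mul_sub, mul_one, Finset.sum_sub_distrib]
  rfl

end Matrix

lemma frobNorm_sq {m n : ℕ} (M : Matrix (Fin m) (Fin n) ℝ) :
    frobNorm M ^ 2 = ∑ i, ∑ j, M i j ^ 2 :=
  sq_sqrt (by positivity)

lemma frobNorm_sq_pos {m n : ℕ} {M : Matrix (Fin m) (Fin n) ℝ} (hM : M ≠ 0) :
    0 < frobNorm M ^ 2 := by
  obtain ⟨i, j, hij⟩ : ∃ i j, M i j ≠ 0 := by
    by_contra! h
    exact hM (ext h)
  rw [frobNorm_sq]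
  calc 0 < M i j ^ 2 := by positivity
    _ ≤ ∑ j, M i j ^ 2 := Finset.single_le_sum (fun _ _ => sq_nonneg _) (Finset.mem_univ j)
    _ ≤ ∑ i, ∑ j, M i j ^ 2 :=
        Finset.single_le_sum (f := fun i => ∑ j, M i j ^ 2) (fun _ _ => by positivity)
          (Finset.mem_univ i)

lemma specNorm_pos {m n : ℕ} {M : Matrix (Fin m) (Fin n) ℝ} (hM : M ≠ 0) : 0 < specNorm M :=
  norm_pos_iff.mpr <| LinearMap.toContinuousLinearMap.map_ne_zero_iff.mpr <|
    toEuclideanLin.map_ne_zero_iff.mpr hM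

lemma abs_eigenvalues_symmPart_le_specNorm {d : ℕ} (M : Matrix (Fin d) (Fin d) ℝ) (i : Fin d) :
    |(isHermitian_symmPart M).eigenvalues i| ≤ specNorm M := by
  set b := (isHermitian_symmPart M).eigenvectorBasis i
  have hb : ‖b‖ = 1 := (isHermitian_symmPart M).eigenvectorBasis.orthonormal.1 i
  have heig : (isHermitian_symmPart M).eigenvalues i = inner ℝ b (toEuclideanLin M b) := by
    rw [(isHermitian_symmPart M).eigenvalues_eq, EuclideanSpace.inner_eq_star_dotProduct]
    simp [b, dotProduct_symmPart_mulVec, dotProduct_comm]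
  rw [heig]
  calc |inner ℝ b (toEuclideanLin M b)| ≤ ‖b‖ * ‖toEuclideanLin M b‖ :=
        abs_real_inner_le_norm _ _
    _ ≤ specNorm M := by
        simpa [hb, specNorm] using (LinearMap.toContinuousLinearMap (toEuclideanLin M)).le_opNorm b

lemma measure_lt_abs_dotProduct_mulVec_sub_trace_le {d : ℕ} (M : Matrix (Fin d) (Fin d) ℝ)
    {s : ℝ} (hs : 0 ≤ s) (hsM : s * specNorm M ≤ 1 / 4) (t : ℝ) :
    (Measure.pi fun _ : Fin d => gaussianReal 0 1) {v | t < |v ⬝ᵥ M *ᵥ v - M.trace|} ≤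
      ENNReal.ofReal (2 * exp (2 * s ^ 2 * frobNorm M ^ 2 - s * t)) := by
  have hA := isHermitian_symmPart M
  have hseig (i : Fin d) : |s * hA.eigenvalues i| ≤ 1 / 4 := by
    rw [abs_mul, abs_of_nonneg hs]
    exact (mul_le_mul_of_nonneg_left (abs_eigenvalues_symmPart_le_specNorm M i) hs).trans hsM
  have heigF : ∑ i, hA.eigenvalues i ^ 2 ≤ frobNorm M ^ 2 := by
    rw [hA.sum_eigenvalues_sq, frobNorm_sq]
    exact sum_sq_symmPart_le M
  have hlaw := hA.measure_dotProduct_mulVec_sub_trace_mem_eq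
    (S := {x | t < |x|}) (measurableSet_lt measurable_const continuous_abs.measurable)
  simp only [dotProduct_symmPart_mulVec, trace_symmPart] at hlaw
  calc _ = (Measure.pi fun _ : Fin d => gaussianReal 0 1)
          {w | t < |∑ i, hA.eigenvalues i * (w i ^ 2 - 1)|} := hlaw
    _ ≤ ENNReal.ofReal (2 * exp (2 * s ^ 2 * ∑ i, hA.eigenvalues i ^ 2 - s * t)) :=
        measure_lt_abs_sum_mul_sq_sub_one_le _ hs hseig t
    _ ≤ _ := by gcongr

/-- **Hanson–Wright inequality for Gaussian vectors.** For `v` with i.i.d. standard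
Gaussian coordinates and any `t > 0`,
`P(|vᵀMv - tr M| > t) ≤ 2 exp(-(1/8) min(t²/‖M‖_F², t/‖M‖₂))`. -/
theorem stmt7 {d : ℕ} (M : Matrix (Fin d) (Fin d) ℝ) (t : ℝ) (ht : 0 < t) :
    (Measure.pi fun _ : Fin d => gaussianReal 0 1)
        {v : Fin d → ℝ | t < |v ⬝ᵥ M.mulVec v - Matrix.trace M|} ≤
      ENNReal.ofReal
        (2 * Real.exp (-(1 / 8) * min (t ^ 2 / frobNorm M ^ 2) (t / specNorm M))) := by
  rcases eq_or_ne M 0 with rfl | hM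
  -- both quotients are `x / 0 = 0` here, so the bound reads `P(…) ≤ 2`
  · refine prob_le_one.trans ?_
    simp [frobNorm, specNorm]
  have hF := frobNorm_sq_pos hM
  have hS := specNorm_pos hM
  set s := min (t / (4 * frobNorm M ^ 2)) (1 / (4 * specNorm M))
  have hsM : s * specNorm M ≤ 1 / 4 :=
    (mul_le_mul_of_nonneg_right (min_le_right _ _) hS.le).trans_eq (by field_simp)
  calc _ ≤ ENNReal.ofReal (2 * exp (2 * s ^ 2 * frobNorm M ^ 2 - s * t)) :=
        measure_lt_abs_dotProduct_mulVec_sub_trace_le M (le_min (by positivity) (by positivity))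
          hsM t
    _ ≤ _ := by
        gcongr
        exact chernoff_exponent_at_min_le ht hF hS
end

section
/- (Dikin ellipsoid containment) Let θ ∈ Int(K) and let z ∈ ℝ^d satisfy ‖z − θ‖_{H(θ)} ≤ 1. Then z ∈ K, i.e. a_iᵀz ≤ b_i for all i = 1, …, m. -/
open Matrix Real
open scoped BigOperators

lemma quadform_eq {m d : ℕ} (A : Matrix (Fin m) (Fin d) ℝ) (b : Fin m → ℝ)
    (θ h : Fin d → ℝ) :
    h ⬝ᵥ (logBarrierHessian A b θ).mulVec h
      = ∑ i, ((b i - A.mulVec θ i) ^ 2)⁻¹ * (A i ⬝ᵥ h) ^ 2 := by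
  simp only [logBarrierHessian, Matrix.mulVec, dotProduct, Finset.sum_apply,
    Matrix.sum_apply, Matrix.smul_apply, Matrix.vecMulVec_apply, smul_eq_mul,
    Finset.sum_mul, Finset.mul_sum, sq]
  refine ((Finset.sum_congr rfl fun x _ => Finset.sum_comm).trans
    Finset.sum_comm).trans ?_
  refine Finset.sum_congr rfl fun i _ => Finset.sum_congr rfl fun j _ =>
    Finset.sum_congr rfl fun k _ => ?_
  ring

/-- **Dikin ellipsoid containment.** If `θ ∈ Int K` and `‖z - θ‖_{H(θ)} ≤ 1`,
then `z ∈ K`, i.e. `a_iᵀ z ≤ b_i` for all `i`. -/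
theorem stmt8 {m d : ℕ} (A : Matrix (Fin m) (Fin d) ℝ) (b : Fin m → ℝ)
    (θ z : Fin d → ℝ) (hθ : ∀ i, A.mulVec θ i < b i)
    (hz : mnorm (logBarrierHessian A b θ) (z - θ) ≤ 1) :
    ∀ i, A.mulVec z i ≤ b i := by
  intro i
  set h := z - θ with hh
  set Q := h ⬝ᵥ (logBarrierHessian A b θ).mulVec h with hQ
  have hQeq : Q = ∑ j, ((b j - A.mulVec θ j) ^ 2)⁻¹ * (A j ⬝ᵥ h) ^ 2 :=
    quadform_eq A b θ h
  have hterm : ∀ j, 0 ≤ ((b j - A.mulVec θ j) ^ 2)⁻¹ * (A j ⬝ᵥ h) ^ 2 := by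
    intro j; positivity
  have hQ0 : 0 ≤ Q := by rw [hQeq]; exact Finset.sum_nonneg fun j _ => hterm j
  have hQ1 : Q ≤ 1 := by
    have := Real.sq_sqrt hQ0
    calc Q = (Real.sqrt Q) ^ 2 := this.symm
    _ ≤ 1 ^ 2 := by
        exact pow_le_pow_left₀ (Real.sqrt_nonneg _) hz 2
    _ = 1 := one_pow 2
  have hi : ((b i - A.mulVec θ i) ^ 2)⁻¹ * (A i ⬝ᵥ h) ^ 2 ≤ 1 := by
    calc ((b i - A.mulVec θ i) ^ 2)⁻¹ * (A i ⬝ᵥ h) ^ 2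
        ≤ Q := by
          rw [hQeq]
          exact Finset.single_le_sum (fun j _ => hterm j) (Finset.mem_univ i)
    _ ≤ 1 := hQ1
  set s := b i - A.mulVec θ i with hs
  have hspos : 0 < s := by simpa [hs] using sub_pos.mpr (hθ i)
  have hsq : (A i ⬝ᵥ h) ^ 2 ≤ s ^ 2 := by
    have h2 : (0:ℝ) < s ^ 2 := by positivity
    rw [inv_mul_le_iff₀ h2, mul_one] at hi
    exact hi
  have habs : A i ⬝ᵥ h ≤ s := by
    calc A i ⬝ᵥ h ≤ |A i ⬝ᵥ h| := le_abs_self _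
    _ = Real.sqrt ((A i ⬝ᵥ h) ^ 2) := (Real.sqrt_sq_eq_abs _).symm
    _ ≤ Real.sqrt (s ^ 2) := Real.sqrt_le_sqrt hsq
    _ = s := by rw [Real.sqrt_sq hspos.le]
  have hAz : A.mulVec z i = A.mulVec θ i + A i ⬝ᵥ h := by
    simp [hh, Matrix.mulVec, dotProduct_sub]
  rw [hAz]
  linarith
end

section
/- (Cross-ratio lower bound in the local log-barrier norm) Let u, v ∈ Int(K) be distinct, let p, q ∈ K, and suppose u = p + s(q − p) and v = p + t(q − p) with 0 < s < t < 1 (so p, u, v, q lie on a common chord in this order). Then ( ‖u − v‖₂ · ‖p − q‖₂ / ( ‖p − u‖₂ · ‖v − q‖₂ ) )² ≥ (1/m) Σ_{i=1}^m ( a_iᵀ(u − v) )² / ( b_i − a_iᵀu )². -/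
open Matrix Real
open scoped BigOperators

/-- The Euclidean (ℓ²) norm on `ℝ^d`. -/
noncomputable def l2norm {d : ℕ} (x : Fin d → ℝ) : ℝ :=
  Real.sqrt (∑ i, x i ^ 2)

lemma l2norm_smul' {d : ℕ} (c : ℝ) (x : Fin d → ℝ) : l2norm (c • x) = |c| * l2norm x := by
  unfold l2norm
  rw [← Real.sqrt_sq_eq_abs, ← Real.sqrt_mul (sq_nonneg c)]
  congr 1
  rw [Finset.mul_sum]
  refine Finset.sum_congr rfl fun i _ => ?_
  simp [mul_pow]

lemma l2norm_pos' {d : ℕ} {x : Fin d → ℝ} (hx : x ≠ 0) : 0 < l2norm x := by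
  rw [l2norm, Real.sqrt_pos]
  obtain ⟨i, hi⟩ := Function.ne_iff.mp hx
  exact Finset.sum_pos' (fun j _ => sq_nonneg _)
    ⟨i, Finset.mem_univ i, (sq_nonneg _).lt_of_ne (Ne.symm (pow_ne_zero 2 hi))⟩

lemma keybound (s t α β : ℝ) (hs : 0 < s) (hst : s < t) (ht : t < 1)
    (hβ0 : 0 ≤ β) (hβα : 0 ≤ β - α) (hDu : 0 < β - s * α) (_hDv : 0 < β - t * α) :
    ((s - t) * α) ^ 2 / (β - s * α) ^ 2 ≤ ((t - s) / (s * (1 - t))) ^ 2 := by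
  have hden : (0:ℝ) < s * (1 - t) := by nlinarith
  have habs : |α * (s * (1 - t))| ≤ β - s * α := by
    rw [abs_le]
    constructor
    · rcases le_or_gt 0 α with h0 | h0
      · nlinarith
      · nlinarith
    · rcases le_or_gt 0 α with h0 | h0
      · nlinarith [mul_nonneg h0 (show (0:ℝ) ≤ 1 - s * (2 - t) by nlinarith)]
      · nlinarith
  have hsq : (α * (s * (1 - t))) ^ 2 ≤ (β - s * α) ^ 2 :=
    sq_le_sq' (neg_le_of_abs_le habs) (le_of_abs_le habs)
  rw [div_pow, div_le_div_iff₀ (by positivity) (by positivity)]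
  nlinarith [hsq, sq_nonneg (t - s)]

/-- **Cross-ratio lower bound in the local log-barrier norm.** For distinct
`u, v ∈ Int K` lying on a chord `[p, q] ⊆ K` in the order `p, u, v, q`,
`(‖u-v‖₂ ‖p-q‖₂ / (‖p-u‖₂ ‖v-q‖₂))² ≥ (1/m) ∑ i (a_iᵀ(u-v))² / (b_i - a_iᵀu)²`. -/
theorem stmt10 {m d : ℕ} (A : Matrix (Fin m) (Fin d) ℝ) (b : Fin m → ℝ)
    (u v p q : Fin d → ℝ) (huv : u ≠ v)
    (hu : ∀ i, A.mulVec u i < b i) (hv : ∀ i, A.mulVec v i < b i)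
    (hp : ∀ i, A.mulVec p i ≤ b i) (hq : ∀ i, A.mulVec q i ≤ b i)
    (s t : ℝ) (hs : 0 < s) (hst : s < t) (ht : t < 1)
    (hus : u = p + s • (q - p)) (hvt : v = p + t • (q - p)) :
    (1 / (m : ℝ)) * ∑ i, (A i ⬝ᵥ (u - v)) ^ 2 / (b i - A.mulVec u i) ^ 2 ≤
      (l2norm (u - v) * l2norm (p - q) / (l2norm (p - u) * l2norm (v - q))) ^ 2 := by
  have huvw : u - v = (s - t) • (q - p) := by rw [hus, hvt]; module
  have hpuw : p - u = (-s) • (q - p) := by rw [hus]; module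
  have hvqw : v - q = (t - 1) • (q - p) := by rw [hvt]; module
  have hpqw : p - q = (-1 : ℝ) • (q - p) := by module
  have hw0 : q - p ≠ 0 := by
    intro h
    apply huv
    have h2 : u - v = 0 := by rw [huvw, h, smul_zero]
    exact sub_eq_zero.mp h2
  have hN : 0 < l2norm (q - p) := l2norm_pos' hw0
  set C : ℝ := ((t - s) / (s * (1 - t))) ^ 2 with hC
  -- The right-hand side equals C
  have hRHS : (l2norm (u - v) * l2norm (p - q) / (l2norm (p - u) * l2norm (v - q))) ^ 2 = C := by
    rw [huvw, hpuw, hvqw, hpqw, l2norm_smul', l2norm_smul', l2norm_smul', l2norm_smul',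
      abs_of_neg (show s - t < 0 by linarith), abs_neg, abs_one,
      abs_neg, abs_of_pos hs, abs_of_neg (show t - 1 < 0 by linarith)]
    have hNN : l2norm (q - p) * l2norm (q - p) ≠ 0 := by positivity
    have e1 : -(s - t) * l2norm (q - p) * (1 * l2norm (q - p)) =
        (t - s) * (l2norm (q - p) * l2norm (q - p)) := by ring
    have e2 : s * l2norm (q - p) * (-(t - 1) * l2norm (q - p)) =
        (s * (1 - t)) * (l2norm (q - p) * l2norm (q - p)) := by ring
    rw [e1, e2, mul_div_mul_right _ _ hNN]
  rw [hRHS]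
  -- Per-term bound
  have hterm : ∀ i : Fin m, (A i ⬝ᵥ (u - v)) ^ 2 / (b i - A.mulVec u i) ^ 2 ≤ C := by
    intro i
    have huu : A.mulVec u i = A i ⬝ᵥ p + s * (A i ⬝ᵥ (q - p)) := by
      show A i ⬝ᵥ u = _
      rw [hus, dotProduct_add, dotProduct_smul, smul_eq_mul]
    have hvv : A.mulVec v i = A i ⬝ᵥ p + t * (A i ⬝ᵥ (q - p)) := by
      show A i ⬝ᵥ v = _
      rw [hvt, dotProduct_add, dotProduct_smul, smul_eq_mul]
    have hqq : A.mulVec q i = A i ⬝ᵥ p + A i ⬝ᵥ (q - p) := by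
      show A i ⬝ᵥ q = _
      rw [← dotProduct_add]
      congr 1
      module
    have hpp : A.mulVec p i = A i ⬝ᵥ p := rfl
    have hdot : A i ⬝ᵥ (u - v) = (s - t) * (A i ⬝ᵥ (q - p)) := by
      rw [huvw, dotProduct_smul, smul_eq_mul]
    have hbu : b i - A.mulVec u i =
        (b i - A i ⬝ᵥ p) - s * (A i ⬝ᵥ (q - p)) := by rw [huu]; ring
    rw [hdot, hbu]
    refine keybound s t (A i ⬝ᵥ (q - p)) (b i - A i ⬝ᵥ p) hs hst ht ?_ ?_ ?_ ?_
    · have := hp i; rw [hpp] at this; linarith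
    · have := hq i; rw [hqq] at this; linarith
    · have := hu i; rw [huu] at this; linarith
    · have := hv i; rw [hvv] at this; linarith
  have hCnn : 0 ≤ C := sq_nonneg _
  have hsum : ∑ i, (A i ⬝ᵥ (u - v)) ^ 2 / (b i - A.mulVec u i) ^ 2 ≤ m * C := by
    calc ∑ i, (A i ⬝ᵥ (u - v)) ^ 2 / (b i - A.mulVec u i) ^ 2
        ≤ ∑ _i : Fin m, C := Finset.sum_le_sum fun i _ => hterm i
      _ = m * C := by simp [mul_comm]
  rcases Nat.eq_zero_or_pos m with hm | hm
  · subst hm; simpa using hCnn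
  · have hm' : (0:ℝ) < m := by exact_mod_cast hm
    rw [one_div, inv_mul_le_iff₀ hm']
    linarith
end

section
/- (Detailed balance for the smoothed Metropolis acceptance rule) Let α, η > 0 and define Φ(θ) := α^{-1} H(θ) + η^{-1} I_d for θ ∈ Int(K). Let f : Int(K) → ℝ be any function. For θ, z ∈ Int(K), define the proposal density factor p(θ, z) := √(det Φ(θ)) · exp(−‖z − θ‖²_{Φ(θ)}) and the acceptance probability a(θ, z) := (1 + √(det Φ(θ) / det Φ(z)))^{-1} · min( e^{f(θ) − f(z)} · e^{‖z − θ‖²_{Φ(θ)} − ‖z − θ‖²_{Φ(z)}}, 1 ). Then for all θ, z ∈ Int(K): a(θ, z) · p(θ, z) · e^{−f(θ)} = a(z, θ) · p(z, θ) · e^{−f(z)}. -/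
open Matrix Real
open scoped BigOperators

/-- The regularized ("soft-threshold") log-barrier Hessian `Φ(x) = α⁻¹ H(x) + η⁻¹ I_d`. -/
noncomputable def softPhi {m d : ℕ} (A : Matrix (Fin m) (Fin d) ℝ) (b : Fin m → ℝ)
    (α η : ℝ) (x : Fin d → ℝ) : Matrix (Fin d) (Fin d) ℝ :=
  α⁻¹ • logBarrierHessian A b x + η⁻¹ • (1 : Matrix (Fin d) (Fin d) ℝ)

/-- The proposal density factor `p(θ, z) = √(det Φ(θ)) · exp(-‖z-θ‖²_{Φ(θ)})`. -/
noncomputable def propDensity {m d : ℕ} (A : Matrix (Fin m) (Fin d) ℝ) (b : Fin m → ℝ)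
    (α η : ℝ) (θ z : Fin d → ℝ) : ℝ :=
  Real.sqrt ((softPhi A b α η θ).det) * Real.exp (-(mnorm (softPhi A b α η θ) (z - θ)) ^ 2)

/-- The smoothed Metropolis acceptance probability
`a(θ, z) = (1 + √(det Φ(θ)/det Φ(z)))⁻¹ · min(e^{f(θ)-f(z)} e^{‖z-θ‖²_{Φ(θ)} - ‖z-θ‖²_{Φ(z)}}, 1)`. -/
noncomputable def acceptProb {m d : ℕ} (A : Matrix (Fin m) (Fin d) ℝ) (b : Fin m → ℝ)
    (α η : ℝ) (f : (Fin d → ℝ) → ℝ) (θ z : Fin d → ℝ) : ℝ :=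
  (1 + Real.sqrt ((softPhi A b α η θ).det / (softPhi A b α η z).det))⁻¹ *
    min (Real.exp (f θ - f z) *
      Real.exp ((mnorm (softPhi A b α η θ) (z - θ)) ^ 2 -
        (mnorm (softPhi A b α η z) (z - θ)) ^ 2)) 1

/-!
The proposal density has the form `√(det Φ(θ)) e^{-N_θ}` with `N_θ := ‖z - θ‖²_{Φ(θ)}`, and the
local norm is symmetric in `θ, z` because it is even in its argument. Writing `s = √(det Φ(θ))`,
`t = √(det Φ(z))`, `U = f(θ) + N_θ`, `V = f(z) + N_z`, the left-hand side factors as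
`(1 + s/t)⁻¹ s · min(e^{U-V}, 1) e^{-U}`. Both factors are symmetric: the first equals
`st/(s+t)`, the second equals `min(e^{-U}, e^{-V})`. The first identity needs `det Φ > 0`, which
holds because `Φ` is a positive multiple of the identity plus a positive semidefinite matrix.
-/

lemma logBarrierHessian_posSemidef {m d : ℕ} (A : Matrix (Fin m) (Fin d) ℝ) (b : Fin m → ℝ)
    (x : Fin d → ℝ) : (logBarrierHessian A b x).PosSemidef :=
  posSemidef_sum _ fun i _ => by
    simpa using (posSemidef_vecMulVec_self_star (A i)).smul (inv_nonneg.2 (sq_nonneg _))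

lemma softPhi_posDef {m d : ℕ} (A : Matrix (Fin m) (Fin d) ℝ) (b : Fin m → ℝ)
    {α η : ℝ} (hα : 0 < α) (hη : 0 < η) (x : Fin d → ℝ) : (softPhi A b α η x).PosDef :=
  PosDef.posSemidef_add ((logBarrierHessian_posSemidef A b x).smul (inv_nonneg.2 hα.le))
    (PosDef.one.smul (inv_pos.2 hη))

lemma mnorm_neg {d : ℕ} (M : Matrix (Fin d) (Fin d) ℝ) (h : Fin d → ℝ) :
    mnorm M (-h) = mnorm M h := by
  rw [mnorm, mulVec_neg, neg_dotProduct, dotProduct_neg, neg_neg, mnorm]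

lemma mnorm_sub_comm {d : ℕ} (M : Matrix (Fin d) (Fin d) ℝ) (x y : Fin d → ℝ) :
    mnorm M (x - y) = mnorm M (y - x) := by
  rw [← neg_sub, mnorm_neg]

lemma inv_one_add_sqrt_div_mul_sqrt {s t : ℝ} (hs : 0 < s) (ht : 0 < t) :
    (1 + √(s / t))⁻¹ * √s = (1 + √(t / s))⁻¹ * √t := by
  have hs' := Real.sqrt_pos.2 hs
  have ht' := Real.sqrt_pos.2 ht
  rw [Real.sqrt_div hs.le, Real.sqrt_div ht.le]
  field_simp
  ring

lemma min_exp_sub_one_mul_exp_neg (u v : ℝ) :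
    min (exp (u - v)) 1 * exp (-u) = min (exp (v - u)) 1 * exp (-v) := by
  rw [min_mul_of_nonneg _ _ (exp_pos _).le, min_mul_of_nonneg _ _ (exp_pos _).le, ← exp_add,
    ← exp_add, one_mul, one_mul, show u - v + -u = -v by ring, show v - u + -v = -u by ring]
  exact min_comm _ _

lemma metropolis_detailed_balance {s t : ℝ} (hs : 0 < s) (ht : 0 < t) (u v a b : ℝ) :
    (1 + √(s / t))⁻¹ * min (exp (u - v) * exp (a - b)) 1 * (√s * exp (-a)) * exp (-u) =
      (1 + √(t / s))⁻¹ * min (exp (v - u) * exp (b - a)) 1 * (√t * exp (-b)) * exp (-v) := by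
  calc _ = ((1 + √(s / t))⁻¹ * √s) * (min (exp ((u + a) - (v + b))) 1 * exp (-(u + a))) := by
        rw [add_sub_add_comm, neg_add, exp_add, exp_add]; ring
    _ = ((1 + √(t / s))⁻¹ * √t) * (min (exp ((v + b) - (u + a))) 1 * exp (-(v + b))) := by
        rw [inv_one_add_sqrt_div_mul_sqrt hs ht, min_exp_sub_one_mul_exp_neg]
    _ = _ := by
        rw [add_sub_add_comm, neg_add, exp_add, exp_add]; ring

theorem stmt15_general {m d : ℕ} (A : Matrix (Fin m) (Fin d) ℝ) (b : Fin m → ℝ)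
    (α η : ℝ) (hα : 0 < α) (hη : 0 < η) (f : (Fin d → ℝ) → ℝ) :
    ∀ θ z : Fin d → ℝ, (∀ i, A.mulVec θ i < b i) → (∀ i, A.mulVec z i < b i) →
      acceptProb A b α η f θ z * propDensity A b α η θ z * Real.exp (-f θ) =
        acceptProb A b α η f z θ * propDensity A b α η z θ * Real.exp (-f z) := by
  intro θ z _ _
  rw [acceptProb, acceptProb, propDensity, propDensity, mnorm_sub_comm _ θ z,
    mnorm_sub_comm _ θ z]
  exact metropolis_detailed_balance (softPhi_posDef A b hα hη θ).det_pos
    (softPhi_posDef A b hα hη z).det_pos _ _ _ _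

/-- **Detailed balance for the smoothed Metropolis acceptance rule.**
For all `θ, z ∈ Int K`:
`a(θ,z) p(θ,z) e^{-f(θ)} = a(z,θ) p(z,θ) e^{-f(z)}`. -/
theorem stmt15 {m d : ℕ} (A : Matrix (Fin m) (Fin d) ℝ) (b : Fin m → ℝ)
    (hbdd : ∃ R : ℝ, ∀ w : Fin d → ℝ, (∀ i, A.mulVec w i ≤ b i) → ∀ j, |w j| ≤ R)
    (α η : ℝ) (hα : 0 < α) (hη : 0 < η) (f : (Fin d → ℝ) → ℝ) :
    ∀ θ z : Fin d → ℝ, (∀ i, A.mulVec θ i < b i) → (∀ i, A.mulVec z i < b i) →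
      acceptProb A b α η f θ z * propDensity A b α η θ z * Real.exp (-f θ) =
        acceptProb A b α η f z θ * propDensity A b α η z θ * Real.exp (-f z) :=
  stmt15_general A b α η hα hη f
end

section
/- (Convexity of the log-determinant of the regularized log-barrier Hessian) Let c ≥ 0. The function θ ↦ log det( H(θ) + c·I_d ) is convex on Int(K). -/
open Matrix Real
open scoped BigOperators

/-!
Write `H(θ) + c I = Vᵀ diag(w(θ)) V`, where `V` stacks the rows `a_i` on top of the identity and
`w(θ) = (s_1(θ)⁻², …, s_m(θ)⁻², c, …, c)`. Expanding the determinant multilinearly in the rows and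
symmetrising over permutations gives
`d! · det (Vᵀ diag(w) V) = ∑_{r : Fin d → rows} (∏ᵢ w_{r i}) · det (V_r)²`,
a polynomial in the weights with nonnegative coefficients. Each weight is log-convex in `θ`
(`s_i` is affine and positive, by weighted AM-GM), and log-convexity survives products and, by
Hölder's inequality, sums; hence `det (H(θ) + c I)` is log-convex. Boundedness of `K` makes `A`
injective, so the matrix is positive definite and the logarithm is taken of a positive number.
-/

namespace Matrix

theorem transpose_fromRows_mul_diagonal_mul_fromRows {m₁ m₂ n R : Type*} [Fintype m₁]
    [Fintype m₂] [DecidableEq m₁] [DecidableEq m₂] [CommRing R] (V₁ : Matrix m₁ n R)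
    (V₂ : Matrix m₂ n R) (w₁ : m₁ → R) (w₂ : m₂ → R) :
    (fromRows V₁ V₂)ᵀ * diagonal (Sum.elim w₁ w₂) * fromRows V₁ V₂
      = V₁ᵀ * diagonal w₁ * V₁ + V₂ᵀ * diagonal w₂ * V₂ := by
  rw [transpose_fromRows, ← fromBlocks_diagonal, fromCols_mul_fromBlocks, fromCols_mul_fromRows]
  simp

theorem mulVec_injective_of_bounded {ι n : Type*} [Fintype n] (A : Matrix ι n ℝ)
    {b : ι → ℝ} (hbdd : ∃ R : ℝ, ∀ w : n → ℝ, (∀ i, (A *ᵥ w) i ≤ b i) → ∀ j, |w j| ≤ R)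
    {θ : n → ℝ} (hθ : ∀ i, (A *ᵥ θ) i ≤ b i) : Function.Injective A.mulVec := by
  obtain ⟨R, hR⟩ := hbdd
  intro x y hxy
  funext j
  by_contra hj
  have hz : A *ᵥ (x - y) = 0 := by rw [mulVec_sub, hxy, sub_self]
  set t := (R + 1 - θ j) / (x - y) j
  have hfeas : ∀ i, (A *ᵥ (θ + t • (x - y))) i ≤ b i := by
    simpa [mulVec_add, mulVec_smul, hz] using hθ
  have hout : (θ + t • (x - y)) j = R + 1 := by
    simp only [Pi.add_apply, Pi.smul_apply, smul_eq_mul, t]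
    field_simp [sub_ne_zero.mpr hj]
    ring
  linarith [le_abs_self ((θ + t • (x - y)) j), hR _ hfeas j]

open Equiv

variable {ι n R : Type*} [Fintype ι] [Fintype n] [DecidableEq n] [CommRing R]

theorem det_mul_eq_sum_det_submatrix (P : Matrix n ι R) (Q : Matrix ι n R) :
    (P * Q).det = ∑ r : n → ι, (∏ i, P i (r i)) * (Q.submatrix r id).det := by
  have hrows : P * Q = of fun i => ∑ k, P i k • Q k := funext fun i => vecMul_eq_sum (P i) Q
  rw [det, hrows]
  exact (detRowAlternating.toMultilinearMap.map_sum _).trans <|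
    Finset.sum_congr rfl fun r _ => detRowAlternating.map_smul_univ _ _

theorem sum_det_submatrix_mul_eq_factorial_smul (V : Matrix ι n R) (G : (n → ι) → R)
    (hG : ∀ r (σ : Perm n), G (r ∘ σ) = Perm.sign σ * G r) :
    ∑ r : n → ι, (V.submatrix r id).det * G r
      = (Fintype.card n).factorial • ∑ r : n → ι, (∏ i, V (r i) i) * G r := by
  have hσ : ∀ σ : Perm n, ∑ r : n → ι, Perm.sign σ * (∏ i, V (r (σ i)) i) * G r
      = ∑ r : n → ι, (∏ i, V (r i) i) * G r := by
    intro σ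
    rw [← (arrowCongr σ (Equiv.refl ι)).sum_comp]
    refine Finset.sum_congr rfl fun r _ => ?_
    have hG' : G (arrowCongr σ (Equiv.refl ι) r) = Perm.sign σ * G r :=
      (Perm.sign_symm σ ▸ hG r σ.symm :)
    have hsign : (Perm.sign σ : R) * Perm.sign σ = 1 := by
      rw [← Int.cast_mul, ← Units.val_mul, Int.units_mul_self, Units.val_one, Int.cast_one]
    simp only [hG', arrowCongr_apply, coe_refl, Function.comp_apply, symm_apply_apply, id_eq]
    linear_combination (∏ i, V (r i) i) * G r * hsign
  simp_rw [det_apply', submatrix_apply, id, Finset.sum_mul]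
  rw [Finset.sum_comm]
  simp_rw [hσ, Finset.sum_const, Finset.card_univ, Fintype.card_perm]

theorem factorial_smul_det_transpose_mul_diagonal_mul [DecidableEq ι] (V : Matrix ι n R)
    (w : ι → R) :
    (Fintype.card n).factorial • (Vᵀ * diagonal w * V).det
      = ∑ r : n → ι, (∏ i, w (r i)) * (V.submatrix r id).det ^ 2 := by
  have halt : ∀ r (σ : Perm n), (∏ i, w ((r ∘ σ) i)) * (V.submatrix (r ∘ σ) id).det
      = Perm.sign σ * ((∏ i, w (r i)) * (V.submatrix r id).det) := by
    intro r σ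
    rw [show V.submatrix (r ∘ σ) id = (V.submatrix r id).submatrix σ id from rfl, det_permute,
      Function.comp_def, Equiv.prod_comp σ fun i => w (r i)]
    ring
  simp only [det_mul_eq_sum_det_submatrix, mul_diagonal, transpose_apply,
    Finset.prod_mul_distrib, mul_assoc]
  rw [← sum_det_submatrix_mul_eq_factorial_smul V _ halt]
  exact Finset.sum_congr rfl fun r _ => by ring

end Matrix

theorem Real.sum_rpow_mul_rpow_le {ι : Type*} (s : Finset ι) {a b : ℝ} (ha : 0 ≤ a) (hb : 0 ≤ b)
    (hab : a + b = 1) {f g : ι → ℝ} (hf : ∀ i ∈ s, 0 ≤ f i) (hg : ∀ i ∈ s, 0 ≤ g i) :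
    ∑ i ∈ s, f i ^ a * g i ^ b ≤ (∑ i ∈ s, f i) ^ a * (∑ i ∈ s, g i) ^ b := by
  rcases ha.eq_or_lt with rfl | ha'
  · simp [show b = 1 by linarith]
  rcases hb.eq_or_lt with rfl | hb'
  · simp [show a = 1 by linarith]
  have hpq : a⁻¹.HolderConjugate b⁻¹ :=
    holderConjugate_iff.mpr ⟨one_lt_inv₀ ha' |>.2 (by linarith), by rw [inv_inv, inv_inv, hab]⟩
  have H := inner_le_Lp_mul_Lq_of_nonneg s hpq (fun i hi => rpow_nonneg (hf i hi) a)
    (fun i hi => rpow_nonneg (hg i hi) b)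
  simp only [one_div, inv_inv] at H
  rwa [Finset.sum_congr rfl fun i hi => rpow_rpow_inv (hf i hi) ha'.ne',
    Finset.sum_congr rfl fun i hi => rpow_rpow_inv (hg i hi) hb'.ne'] at H

section

variable {E : Type*} [AddCommGroup E] [Module ℝ E]

/-- Log-convexity in multiplicative form, which unlike convexity of `log ∘ f` allows `f` to
vanish. -/
def LogConvexOn (s : Set E) (f : E → ℝ) : Prop :=
  (∀ x ∈ s, 0 ≤ f x) ∧ ∀ ⦃x⦄, x ∈ s → ∀ ⦃y⦄, y ∈ s → ∀ ⦃a b : ℝ⦄, 0 ≤ a → 0 ≤ b → a + b = 1 →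
    f (a • x + b • y) ≤ f x ^ a * f y ^ b

namespace LogConvexOn

variable {s : Set E} {f g : E → ℝ}

theorem const {c : ℝ} (hc : 0 ≤ c) : LogConvexOn s fun _ => c :=
  ⟨fun _ _ => hc, fun _ _ _ _ _ _ _ _ hab => by
    rw [← rpow_add' hc (hab ▸ one_ne_zero), hab, rpow_one]⟩

theorem mul (hs : Convex ℝ s) (hf : LogConvexOn s f) (hg : LogConvexOn s g) :
    LogConvexOn s fun x => f x * g x := by
  refine ⟨fun x hx => mul_nonneg (hf.1 x hx) (hg.1 x hx), fun x hx y hy a b ha hb hab => ?_⟩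
  have hz := hs hx hy ha hb hab
  calc f (a • x + b • y) * g (a • x + b • y)
      ≤ (f x ^ a * f y ^ b) * (g x ^ a * g y ^ b) :=
        mul_le_mul (hf.2 hx hy ha hb hab) (hg.2 hx hy ha hb hab) (hg.1 _ hz)
          (mul_nonneg (rpow_nonneg (hf.1 x hx) a) (rpow_nonneg (hf.1 y hy) b))
    _ = (f x * g x) ^ a * (f y * g y) ^ b := by
        rw [mul_rpow (hf.1 x hx) (hg.1 x hx), mul_rpow (hf.1 y hy) (hg.1 y hy)]
        ring

theorem prod {ι : Type*} (hs : Convex ℝ s) (t : Finset ι) {f : ι → E → ℝ}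
    (hf : ∀ i ∈ t, LogConvexOn s (f i)) : LogConvexOn s fun x => ∏ i ∈ t, f i x := by
  classical
  induction t using Finset.induction_on with
  | empty => simpa using const zero_le_one
  | insert i t hi ih =>
    simp_rw [Finset.prod_insert hi]
    exact (hf i (t.mem_insert_self i)).mul hs
      (ih fun j hj => hf j (Finset.mem_insert_of_mem hj))

theorem sum {ι : Type*} (t : Finset ι) {f : ι → E → ℝ}
    (hf : ∀ i ∈ t, LogConvexOn s (f i)) : LogConvexOn s fun x => ∑ i ∈ t, f i x := by
  refine ⟨fun x hx => Finset.sum_nonneg fun i hi => (hf i hi).1 x hx,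
    fun x hx y hy a b ha hb hab => ?_⟩
  calc ∑ i ∈ t, f i (a • x + b • y) ≤ ∑ i ∈ t, f i x ^ a * f i y ^ b :=
        Finset.sum_le_sum fun i hi => (hf i hi).2 hx hy ha hb hab
    _ ≤ _ := sum_rpow_mul_rpow_le t ha hb hab (fun i hi => (hf i hi).1 x hx)
        (fun i hi => (hf i hi).1 y hy)

theorem inv_pow_of_concaveOn (hg : ConcaveOn ℝ s g) (hpos : ∀ x ∈ s, 0 < g x) (n : ℕ) :
    LogConvexOn s fun x => (g x ^ n)⁻¹ := by
  refine ⟨fun x hx => by have := hpos x hx; positivity, fun x hx y hy a b ha hb hab => ?_⟩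
  have hgx := hpos x hx
  have hgy := hpos y hy
  have hgeom : 0 < g x ^ a * g y ^ b := by positivity
  have hamgm : g x ^ a * g y ^ b ≤ g (a • x + b • y) :=
    (geom_mean_le_arith_mean2_weighted ha hb hgx.le hgy.le hab).trans (hg.2 hx hy ha hb hab)
  calc (g (a • x + b • y) ^ n)⁻¹ ≤ ((g x ^ a * g y ^ b) ^ n)⁻¹ :=
        inv_anti₀ (pow_pos hgeom n) (pow_le_pow_left₀ hgeom.le hamgm n)
    _ = (g x ^ n)⁻¹ ^ a * (g y ^ n)⁻¹ ^ b := by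
        rw [mul_pow, rpow_pow_comm hgx.le, rpow_pow_comm hgy.le, mul_inv,
          inv_rpow (by positivity), inv_rpow (by positivity)]

theorem convexOn_log (hs : Convex ℝ s) (hf : LogConvexOn s f) (hpos : ∀ x ∈ s, 0 < f x) :
    ConvexOn ℝ s fun x => log (f x) := by
  refine ⟨hs, fun x hx y hy a b ha hb hab => ?_⟩
  have hfx := hpos x hx
  have hfy := hpos y hy
  calc log (f (a • x + b • y)) ≤ log (f x ^ a * f y ^ b) :=
        log_le_log (hpos _ (hs hx hy ha hb hab)) (hf.2 hx hy ha hb hab)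
    _ = a • log (f x) + b • log (f y) := by
        rw [log_mul (by positivity) (by positivity), log_rpow hfx, log_rpow hfy, smul_eq_mul,
          smul_eq_mul]

theorem det_transpose_mul_diagonal_mul {ι n : Type*} [Fintype ι] [DecidableEq ι] [Fintype n]
    [DecidableEq n] (hs : Convex ℝ s) (V : Matrix ι n ℝ) {w : ι → E → ℝ}
    (hw : ∀ k, LogConvexOn s (w k)) :
    LogConvexOn s fun x => (Vᵀ * diagonal (fun k => w k x) * V).det := by
  have hdet : ∀ x, (Vᵀ * diagonal (fun k => w k x) * V).det =
      ((Fintype.card n).factorial : ℝ)⁻¹ *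
        ∑ r : n → ι, (∏ i, w (r i) x) * (V.submatrix r id).det ^ 2 := fun x => by
    rw [eq_inv_mul_iff_mul_eq₀ (by positivity), ← nsmul_eq_mul]
    exact factorial_smul_det_transpose_mul_diagonal_mul V _
  simp only [hdet]
  exact (const (by positivity)).mul hs <| sum _ fun r _ =>
    (prod hs _ fun i _ => hw (r i)).mul hs (const (sq_nonneg _))

end LogConvexOn

end

section LogBarrier

variable {m d : ℕ} (A : Matrix (Fin m) (Fin d) ℝ) (b : Fin m → ℝ)

theorem logBarrierHessian_eq (θ : Fin d → ℝ) :
    logBarrierHessian A b θ = Aᵀ * diagonal (fun i => ((b i - (A *ᵥ θ) i) ^ 2)⁻¹) * A := by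
  ext j l
  rw [mul_apply]
  simp only [logBarrierHessian, mul_diagonal, transpose_apply, Matrix.sum_apply,
    Matrix.smul_apply, vecMulVec_apply, smul_eq_mul]
  exact Finset.sum_congr rfl fun i _ => by ring

theorem convex_setOf_mulVec_lt : Convex ℝ {θ : Fin d → ℝ | ∀ i, (A *ᵥ θ) i < b i} := by
  simp_rw [Set.ofPred_forall]
  exact convex_iInter fun i => convex_halfSpace_lt (LinearMap.proj i ∘ₗ toLin' A).isLinear (b i)

theorem logConvexOn_det_logBarrierHessian_add_smul_one {c : ℝ} (hc : 0 ≤ c) :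
    LogConvexOn {θ : Fin d → ℝ | ∀ i, (A *ᵥ θ) i < b i}
      fun θ => (logBarrierHessian A b θ + c • 1).det := by
  set S := {θ : Fin d → ℝ | ∀ i, (A *ᵥ θ) i < b i}
  have hS := convex_setOf_mulVec_lt A b
  have hslack : ∀ i, ConcaveOn ℝ S fun θ => b i - (A *ᵥ θ) i := fun i =>
    (concaveOn_const (b i) hS).sub ((LinearMap.proj i ∘ₗ toLin' A).convexOn hS)
  have hw : ∀ k : Fin m ⊕ Fin d, LogConvexOn S fun θ =>
      Sum.elim (fun i => ((b i - (A *ᵥ θ) i) ^ 2)⁻¹) (fun _ => c) k := by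
    rintro (i | j)
    · exact LogConvexOn.inv_pow_of_concaveOn (hslack i) (fun θ hθ => sub_pos.2 (hθ i)) 2
    · exact LogConvexOn.const hc
  convert LogConvexOn.det_transpose_mul_diagonal_mul hS (A.fromRows 1) hw using 2 with θ
  rw [transpose_fromRows_mul_diagonal_mul_fromRows, logBarrierHessian_eq, smul_one_eq_diagonal]
  simp

theorem posDef_logBarrierHessian_add_smul_one
    (hbdd : ∃ R : ℝ, ∀ w : Fin d → ℝ, (∀ i, (A *ᵥ w) i ≤ b i) → ∀ j, |w j| ≤ R)
    {θ : Fin d → ℝ} (hθ : ∀ i, (A *ᵥ θ) i < b i) {c : ℝ} (hc : 0 ≤ c) :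
    (logBarrierHessian A b θ + c • 1).PosDef := by
  rw [logBarrierHessian_eq]
  refine PosDef.add_posSemidef ?_ (PosSemidef.one.smul hc)
  simpa only [conjTranspose_eq_transpose_of_trivial] using
    (PosDef.diagonal fun i => inv_pos.2 (pow_pos (sub_pos.2 (hθ i)) 2)).conjTranspose_mul_mul_same
      (A.mulVec_injective_of_bounded hbdd fun i => (hθ i).le)

end LogBarrier

/-- **Convexity of the log-determinant of the regularized log-barrier Hessian.**
For `c ≥ 0`, the function `θ ↦ log det(H(θ) + c I_d)` is convex on `Int K`. -/
theorem stmt18 {m d : ℕ} (A : Matrix (Fin m) (Fin d) ℝ) (b : Fin m → ℝ)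
    (hbdd : ∃ R : ℝ, ∀ w : Fin d → ℝ, (∀ i, A.mulVec w i ≤ b i) → ∀ j, |w j| ≤ R)
    (c : ℝ) (hc : 0 ≤ c) :
    ConvexOn ℝ {θ : Fin d → ℝ | ∀ i, A.mulVec θ i < b i}
      (fun θ =>
        Real.log ((logBarrierHessian A b θ + c • (1 : Matrix (Fin d) (Fin d) ℝ)).det)) :=
  (logConvexOn_det_logBarrierHessian_add_smul_one A b hc).convexOn_log
    (convex_setOf_mulVec_lt A b) fun _ hθ =>
      (posDef_logBarrierHessian_add_smul_one A b hbdd hθ hc).det_pos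
end
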